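/- arXiv:math/0601493 — 2 statements merged into one kernel-verified Lean document; each statement's English description precedes it below -/
import Mathlib

section
/- Each of the six tetrahedra T21 = {V20,V21,V23,V24}, T22 = {V21,V23,V24,V25}, T23 = {V20,V22,V23,V24}, T24 = {V22,V23,V24,V26}, T25 = {V23,V24,V25,V27}, T26 = {V23,V24,V26,V27} is taken by an integer affine unimodular transformation to the unit basis tetrahedron: for each of these tetrahedra, listed with vertices (P0,P1,P2,P3), there exist a 4×4 integer matrix M with determinant ±1 and an integer vector v ∈ ℤ^4 such that M·P0 + v = 0, M·P1 + v = e1, M·P2 + v = e2, and M·P3 + v = e3, where e1, e2, e3 are the first three standard basis vectors of ℤ^4. -/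
open Matrix Polynomial

def A2 : Matrix (Fin 4) (Fin 4) ℚ :=
  !![0, 1, 0, 0; 0, 0, 1, 0; 0, 0, 0, 1; 1, -4, 1, 4]

noncomputable def B21 : Matrix (Fin 4) (Fin 4) ℚ := (A2 ^ 2)⁻¹
noncomputable def B22 : Matrix (Fin 4) (Fin 4) ℚ := (A2 - 1) ^ 2 * (A2 ^ 2)⁻¹
noncomputable def B23 : Matrix (Fin 4) (Fin 4) ℚ := (A2 + 1) * A2⁻¹

def V20 : Fin 4 → ℚ := ![-4, -3, -2, 0]

/-- `V i j k` is the point `B21^i * B22^j * B23^k` applied to `V20`;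
the paper's vertex `V_{2,4i+2j+k}`. -/
noncomputable def V (i j k : ℕ) : Fin 4 → ℚ := (B21 ^ i * B22 ^ j * B23 ^ k).mulVec V20

def stdQ (m : Fin 4) : Fin 4 → ℚ := fun i => if i = m then 1 else 0

/-- The tetrahedron with ordered vertices `P0 P1 P2 P3` is taken by an integer affine
unimodular transformation to the unit basis tetrahedron. -/
def UnimodularToUnitTetra (P0 P1 P2 P3 : Fin 4 → ℚ) : Prop :=
  ∃ (M : Matrix (Fin 4) (Fin 4) ℤ) (v : Fin 4 → ℤ),
    (M.det = 1 ∨ M.det = -1) ∧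
    (M.map (Int.cast : ℤ → ℚ)).mulVec P0 + (fun i => (v i : ℚ)) = 0 ∧
    (M.map (Int.cast : ℤ → ℚ)).mulVec P1 + (fun i => (v i : ℚ)) = stdQ 0 ∧
    (M.map (Int.cast : ℤ → ℚ)).mulVec P2 + (fun i => (v i : ℚ)) = stdQ 1 ∧
    (M.map (Int.cast : ℤ → ℚ)).mulVec P3 + (fun i => (v i : ℚ)) = stdQ 2

/-!
`A2` is the companion matrix of `X⁴ - 4X³ - X² + 4X - 1`, whose constant term is a unit, so `A2⁻¹`
has integer entries; hence `B21`, `B22`, `B23`, being integer polynomials in `A2` and `A2⁻¹`, are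
integer matrices and all the points `V i j k` lie in `ℤ⁴`. A tetrahedron `P₀P₁P₂P₃` in `ℤ⁴` is
carried to the unit one as soon as its edge vectors `Pₖ - P₀` extend by one more vector `w` to a
basis of `ℤ⁴`: take `M` the inverse of that basis matrix and `v = -M P₀`. For each of the six
tetrahedra such a `w` is exhibited and the unimodularity of the basis is checked by computation.
-/

def A2Int : Matrix (Fin 4) (Fin 4) ℤ :=
  !![0, 1, 0, 0; 0, 0, 1, 0; 0, 0, 0, 1; 1, -4, 1, 4]

def A2InvInt : Matrix (Fin 4) (Fin 4) ℤ :=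
  !![4, -1, -4, 1; 1, 0, 0, 0; 0, 1, 0, 0; 0, 0, 1, 0]

def B21Int : Matrix (Fin 4) (Fin 4) ℤ := A2InvInt ^ 2
def B22Int : Matrix (Fin 4) (Fin 4) ℤ := (A2Int - 1) ^ 2 * A2InvInt ^ 2
def B23Int : Matrix (Fin 4) (Fin 4) ℤ := (A2Int + 1) * A2InvInt

def VInt (i j k : ℕ) : Fin 4 → ℤ := (B21Int ^ i * B22Int ^ j * B23Int ^ k) *ᵥ ![-4, -3, -2, 0]

lemma A2_eq_cast : A2 = (Int.castRingHom ℚ).mapMatrix A2Int := by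
  ext i j
  fin_cases i <;> fin_cases j <;> simp [A2, A2Int]

lemma A2Int_mul_A2InvInt : A2Int * A2InvInt = 1 := by decide

lemma inv_A2_eq_cast : A2⁻¹ = (Int.castRingHom ℚ).mapMatrix A2InvInt :=
  Matrix.inv_eq_right_inv <| by rw [A2_eq_cast, ← map_mul, A2Int_mul_A2InvInt, map_one]

lemma B21_eq_cast : B21 = (Int.castRingHom ℚ).mapMatrix B21Int := by
  rw [B21, B21Int, ← Matrix.inv_pow', inv_A2_eq_cast, map_pow]

lemma B22_eq_cast : B22 = (Int.castRingHom ℚ).mapMatrix B22Int := by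
  rw [B22, B22Int, ← Matrix.inv_pow', inv_A2_eq_cast, A2_eq_cast]
  simp only [map_mul, map_pow, map_sub, map_one]

lemma B23_eq_cast : B23 = (Int.castRingHom ℚ).mapMatrix B23Int := by
  rw [B23, B23Int, inv_A2_eq_cast, A2_eq_cast]
  simp only [map_mul, map_add, map_one]

lemma V_eq_cast (i j k : ℕ) : V i j k = Int.cast ∘ VInt i j k := by
  have hV20 : V20 = Int.cast ∘ ![-4, -3, -2, 0] := by
    ext l
    fin_cases l <;> simp [V20]
  ext l
  rw [V, VInt, B21_eq_cast, B22_eq_cast, B23_eq_cast, hV20, ← map_pow, ← map_pow, ← map_pow,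
    ← map_mul, ← map_mul]
  exact ((Int.castRingHom ℚ).map_mulVec _ _ l).symm

lemma stdQ_eq_cast_single (k : Fin 4) : stdQ k = Int.cast ∘ Pi.single k 1 := by
  ext i
  by_cases h : i = k <;> simp [stdQ, h]

lemma intCast_mulVec_add (M : Matrix (Fin 4) (Fin 4) ℤ) (p v : Fin 4 → ℤ) :
    (M.map (Int.cast : ℤ → ℚ)).mulVec (Int.cast ∘ p) + (fun i => (v i : ℚ)) =
      Int.cast ∘ (M *ᵥ p + v) := by
  ext i
  simpa using ((Int.castRingHom ℚ).map_mulVec M p i).symm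

theorem unimodularToUnitTetra_of_isUnit_det (p₀ p₁ p₂ p₃ w : Fin 4 → ℤ)
    (h : IsUnit (Matrix.of ![p₁ - p₀, p₂ - p₀, p₃ - p₀, w]).det) :
    UnimodularToUnitTetra (Int.cast ∘ p₀) (Int.cast ∘ p₁) (Int.cast ∘ p₂) (Int.cast ∘ p₃) := by
  set N := (Matrix.of ![p₁ - p₀, p₂ - p₀, p₃ - p₀, w])ᵀ
  have hN : IsUnit N.det := by rwa [Matrix.det_transpose]
  have hM : IsUnit N⁻¹.det := by rw [Matrix.det_nonsing_inv]; exact hN.ringInverse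
  have edge (k : Fin 4) (p : Fin 4 → ℤ) (hp : N.col k = p - p₀) :
      N⁻¹ *ᵥ p + -(N⁻¹ *ᵥ p₀) = Pi.single k 1 := by
    rw [← sub_eq_add_neg, ← Matrix.mulVec_sub, ← hp, ← Matrix.mulVec_single_one,
      Matrix.mulVec_mulVec, Matrix.nonsing_inv_mul N hN, Matrix.one_mulVec]
  refine ⟨N⁻¹, -(N⁻¹ *ᵥ p₀), Int.isUnit_iff.mp hM, ?_, ?_, ?_, ?_⟩ <;>
    simp only [intCast_mulVec_add, stdQ_eq_cast_single]
  · simp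
  · rw [edge 0 p₁ rfl]
  · rw [edge 1 p₂ rfl]
  · rw [edge 2 p₃ rfl]

theorem statement13 :
    UnimodularToUnitTetra (V 0 0 0) (V 0 0 1) (V 0 1 1) (V 1 0 0) ∧
    UnimodularToUnitTetra (V 0 0 1) (V 0 1 1) (V 1 0 0) (V 1 0 1) ∧
    UnimodularToUnitTetra (V 0 0 0) (V 0 1 0) (V 0 1 1) (V 1 0 0) ∧
    UnimodularToUnitTetra (V 0 1 0) (V 0 1 1) (V 1 0 0) (V 1 1 0) ∧
    UnimodularToUnitTetra (V 0 1 1) (V 1 0 0) (V 1 0 1) (V 1 1 1) ∧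
    UnimodularToUnitTetra (V 0 1 1) (V 1 0 0) (V 1 1 0) (V 1 1 1) := by
  simp only [V_eq_cast]
  -- each `w` solves `c ⬝ᵥ w = ±1`, where `c` is the cofactor vector of the three edge vectors
  refine ⟨unimodularToUnitTetra_of_isUnit_det _ _ _ _ ![1, 0, 0, 0] ?_,
    unimodularToUnitTetra_of_isUnit_det _ _ _ _ ![3, 0, 0, 2] ?_,
    unimodularToUnitTetra_of_isUnit_det _ _ _ _ ![0, 0, 1, 4] ?_,
    unimodularToUnitTetra_of_isUnit_det _ _ _ _ ![0, 1, 1, 1] ?_,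
    unimodularToUnitTetra_of_isUnit_det _ _ _ _ ![3, 0, 0, 2] ?_,
    unimodularToUnitTetra_of_isUnit_det _ _ _ _ ![3, 0, 0, 1] ?_⟩ <;>
  exact Int.isUnit_iff.mpr (by decide)
end

section
/- The integer distances from the origin to the planes spanned by the tetrahedra T21, T22, T23, T24, T25, T26 equal 1, 2, 2, 4, 8, 13 respectively: for each tetrahedron T2m with corresponding value d_m in (1,2,2,4,8,13), there exists an integer linear functional f on ℤ^4, given by a coefficient vector in ℤ^4 whose entries have greatest common divisor 1, such that f(P) = d_m for every vertex P of T2m. -/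
open Matrix Polynomial

/-- The plane through `P0 P1 P2 P3` lies at integer distance `d` from the origin:
there is a primitive integer linear functional taking value `d` at all four points. -/
def AtIntegerDistance (d : ℤ) (P0 P1 P2 P3 : Fin 4 → ℚ) : Prop :=
  ∃ f : Fin 4 → ℤ, Finset.univ.gcd f = 1 ∧
    (∑ i, (f i : ℚ) * P0 i = (d : ℚ)) ∧
    (∑ i, (f i : ℚ) * P1 i = (d : ℚ)) ∧
    (∑ i, (f i : ℚ) * P2 i = (d : ℚ)) ∧
    (∑ i, (f i : ℚ) * P3 i = (d : ℚ))

/-!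
Since `B21 = A2⁻¹ ^ 2`, `B22 = (1 - A2⁻¹) ^ 2` and `B23 = 1 + A2⁻¹`, every vertex is a polynomial
in `A2⁻¹` applied to `V20`, and `A2⁻¹` is the inverse companion map
`v ↦ (4 v₀ - v₁ - 4 v₂ + v₃, v₀, v₁, v₂)`. This gives the eight vertices as explicit integer
points. For each tetrahedron the functional is the primitive integer normal of the hyperplane through
its vertices (the generalized cross product of three edge vectors, divided by its content); its
common value at the vertices is the distance.
-/

namespace Matrix

variable {n K : Type*} [Fintype n] [DecidableEq n] [CommRing K] {A : Matrix n n K}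

theorem sub_one_sq_mul_inv_sq (h : IsUnit A.det) : (A - 1) ^ 2 * (A ^ 2)⁻¹ = (1 - A⁻¹) ^ 2 := by
  have hc : Commute (A - 1) A⁻¹ := by
    rw [Commute, SemiconjBy, sub_mul, mul_sub, mul_nonsing_inv A h, nonsing_inv_mul A h,
      one_mul, mul_one]
  rw [← inv_pow', ← hc.mul_pow, sub_mul, mul_nonsing_inv A h, one_mul]

theorem add_one_mul_inv (h : IsUnit A.det) : (A + 1) * A⁻¹ = 1 + A⁻¹ := by
  rw [add_mul, mul_nonsing_inv A h, one_mul]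

end Matrix

def A2inv : Matrix (Fin 4) (Fin 4) ℚ :=
  !![4, -1, -4, 1; 1, 0, 0, 0; 0, 1, 0, 0; 0, 0, 1, 0]

theorem A2_mul_A2inv : A2 * A2inv = 1 := by
  ext i j
  fin_cases i <;> fin_cases j <;> simp [A2, A2inv, mul_apply, Fin.sum_univ_four, one_apply]

theorem A2_inv : A2⁻¹ = A2inv := inv_eq_right_inv A2_mul_A2inv

theorem isUnit_det_A2 : IsUnit A2.det := isUnit_det_of_right_inverse A2_mul_A2inv

theorem A2inv_mulVec (v : Fin 4 → ℚ) :
    A2inv *ᵥ v = ![4 * v 0 - v 1 - 4 * v 2 + v 3, v 0, v 1, v 2] := by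
  ext i
  fin_cases i <;> simp [A2inv, mulVec, dotProduct, Fin.sum_univ_four]; ring

theorem V_eq (i j k : ℕ) :
    V i j k = (A2inv ^ 2) ^ i *ᵥ ((1 - A2inv) ^ 2) ^ j *ᵥ (1 + A2inv) ^ k *ᵥ V20 := by
  rw [V, B21, B22, B23, sub_one_sq_mul_inv_sq isUnit_det_A2, add_one_mul_inv isUnit_det_A2,
    ← inv_pow', A2_inv, mulVec_mulVec, mulVec_mulVec]

section Vertices

attribute [local simp] V_eq pow_two sub_mulVec add_mulVec A2inv_mulVec V20
attribute [local simp ←] mulVec_mulVec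

theorem V_000 : V 0 0 0 = ![-4, -3, -2, 0] := by simp

theorem V_001 : V 0 0 1 = ![-9, -7, -5, -2] := by simp; norm_num

theorem V_010 : V 0 1 0 = ![0, 0, 0, 1] := by simp; norm_num

theorem V_011 : V 0 1 1 = ![1, 0, 0, 1] := by simp; norm_num

theorem V_100 : V 1 0 0 = ![-6, -5, -4, -3] := by simp; norm_num

theorem V_101 : V 1 0 1 = ![-12, -11, -9, -7] := by simp; norm_num

theorem V_110 : V 1 1 0 = ![4, 1, 0, 0] := by simp; norm_num

theorem V_111 : V 1 1 1 = ![19, 5, 1, 0] := by simp; norm_num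

end Vertices

theorem statement14 :
    AtIntegerDistance 1 (V 0 0 0) (V 0 0 1) (V 0 1 1) (V 1 0 0) ∧
    AtIntegerDistance 2 (V 0 0 1) (V 0 1 1) (V 1 0 0) (V 1 0 1) ∧
    AtIntegerDistance 2 (V 0 0 0) (V 0 1 0) (V 0 1 1) (V 1 0 0) ∧
    AtIntegerDistance 4 (V 0 1 0) (V 0 1 1) (V 1 0 0) (V 1 1 0) ∧
    AtIntegerDistance 8 (V 0 1 1) (V 1 0 0) (V 1 0 1) (V 1 1 1) ∧
    AtIntegerDistance 13 (V 0 1 1) (V 1 0 0) (V 1 1 0) (V 1 1 1) := by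
  simp only [AtIntegerDistance, V_000, V_001, V_010, V_011, V_100, V_101, V_110, V_111]
  refine ⟨⟨![-1, 7, -9, 2], by decide, ?_⟩, ⟨![-5, 27, -32, 7], by decide, ?_⟩,
    ⟨![0, 4, -7, 2], by decide, ?_⟩, ⟨![0, 4, -9, 4], by decide, ?_⟩,
    ⟨![-17, 87, -104, 25], by decide, ?_⟩, ⟨![-7, 41, -59, 20], by decide, ?_⟩⟩ <;>
  norm_num [Fin.sum_univ_succ]
end
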